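/- Assume the rearrangement setup and additionally that X is convex in R and that there is no walk in R starting in M and ending in Y, and none starting in Y and ending in M. If R ∈ T_a, then S ∈ T_a. -/

import Mathlib

/-- A homomorphism between digraphs `(V, A)` and `(W, B)`:
a map sending every arc to an arc. -/
def IsHom {V W : Type} (A : V → V → Prop) (B : W → W → Prop) (f : V → W) : Prop :=
  ∀ ⦃v w : V⦄, A v w → B (f v) (f w)

/-- A strict homomorphism: a homomorphism mapping proper arcs to proper arcs. -/
def IsStrictHom {V W : Type} (A : V → V → Prop) (B : W → W → Prop) (f : V → W) : Prop :=
  IsHom A B f ∧ ∀ ⦃v w : V⦄, A v w → v ≠ w → f v ≠ f w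

/-- Adjacency in a digraph. -/
def DAdj {V : Type} (A : V → V → Prop) (v w : V) : Prop := A v w ∨ A w v

/-- `v` and `w` are connected in `X`: `v = w` (with `v ∈ X`), or there is a line
`z 0, …, z I` inside `X` connecting them, consecutive members being adjacent. -/
def ConnIn {V : Type} (A : V → V → Prop) (X : Set V) (v w : V) : Prop :=
  ∃ (I : ℕ) (z : ℕ → V), z 0 = v ∧ z I = w ∧ (∀ i ≤ I, z i ∈ X) ∧
    ∀ i < I, DAdj A (z i) (z (i + 1))

/-- `γ_X(v)`: the set of `w ∈ X` connected with `v` in `X`. -/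
def gammaSet {V : Type} (A : V → V → Prop) (X : Set V) (v : V) : Set V :=
  {w | ConnIn A X v w}

/-- `Γ_ξ(v)`: the connectivity component of `v` in the preimage `ξ⁻¹(ξ(v))`. -/
def GammaComp {V W : Type} (A : V → V → Prop) (ξ : V → W) (v : V) : Set V :=
  gammaSet A {u | ξ u = ξ v} v

/-- The set of homomorphisms `H(G,H)` (as a type). -/
def HomSet {V W : Type} (A : V → V → Prop) (B : W → W → Prop) : Type :=
  {f : V → W // IsHom A B f}

/-- The set of strict homomorphisms `S(G,H)` (as a type). -/
def StrictHomSet {V W : Type} (A : V → V → Prop) (B : W → W → Prop) : Type :=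
  {f : V → W // IsStrictHom A B f}

/-- The vertex set of the digraph `G_ξ`: the components `Γ_ξ(v)`, `v ∈ V(G)`. -/
def GVert {V W : Type} (A : V → V → Prop) (ξ : V → W) : Type :=
  {C : Set V // ∃ v, C = GammaComp A ξ v}

/-- The arc relation of the digraph `G_ξ`. -/
def GArc {V W : Type} (A : V → V → Prop) (ξ : V → W) :
    GVert A ξ → GVert A ξ → Prop :=
  fun C D => ∃ a ∈ C.1, ∃ b ∈ D.1, A a b

/-- The canonical map `π_ξ : G → G_ξ`, `v ↦ Γ_ξ(v)`. -/
def piMap {V W : Type} (A : V → V → Prop) (ξ : V → W) (v : V) : GVert A ξ :=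
  ⟨GammaComp A ξ v, v, rfl⟩

/-- `Θ_{G,H'}(ξ)`: the homomorphisms `ζ : G → H'` with `G_ζ = G_ξ`
(equality of the digraphs `G_ζ` and `G_ξ`, i.e. of their vertex sets,
which determines the arc sets). -/
def ThetaSet {V W W' : Type} (A : V → V → Prop) (B' : W' → W' → Prop)
    (ξ : V → W) : Set (V → W') :=
  {ζ | IsHom A B' ζ ∧
    {C : Set V | ∃ v, C = GammaComp A ζ v} = {C : Set V | ∃ v, C = GammaComp A ξ v}}

/-- `R ⊑_Γ S` with respect to a class `D'` of finite digraphs: a strong Γ-scheme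
from `R` to `S` exists, i.e. for every finite digraph `G ∈ D'` an injective map
`ρ_G : H(G,R) → H(G,S)` with `Γ_{ρ_G(ξ)}(v) = Γ_ξ(v)` for all `ξ`, `v`. -/
def SqGamma (D' : (V : Type) → (V → V → Prop) → Prop)
    {VR VS : Type} (R : VR → VR → Prop) (S : VS → VS → Prop) : Prop :=
  ∀ (V : Type) [Finite V] [Nonempty V] (A : V → V → Prop), D' V A →
    ∃ ρ : HomSet A R → HomSet A S, Function.Injective ρ ∧
      ∀ (ξ : HomSet A R) (v : V), GammaComp A (ρ ξ).1 v = GammaComp A ξ.1 v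

/-- The class `T_a`: digraphs whose loop-removed digraph is acyclic,
i.e. every closed walk is trivial. -/
def Ta {V : Type} (A : V → V → Prop) : Prop :=
  ∀ (z : ℕ → V) (I : ℕ), 0 < I →
    (∀ i < I, A (z i) (z (i + 1)) ∧ z i ≠ z (i + 1)) → z 0 ≠ z I

/-- A poset: a reflexive, antisymmetric, transitive digraph. -/
def IsPosetRel {V : Type} (A : V → V → Prop) : Prop :=
  Reflexive A ∧ AntiSymmetric A ∧ Transitive A

/-- An element of `P^*`: an irreflexive, antisymmetric, transitive digraph. -/
def IsStrictPosetRel {V : Type} (A : V → V → Prop) : Prop :=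
  Irreflexive A ∧ AntiSymmetric A ∧ Transitive A

/-- The direct (disjoint) sum of two digraphs. -/
def sumRel {V W : Type} (A : V → V → Prop) (B : W → W → Prop) :
    V ⊕ W → V ⊕ W → Prop
  | Sum.inl v, Sum.inl w => A v w
  | Sum.inr v, Sum.inr w => B v w
  | _, _ => False

/-- The open neighborhood `N(v)`. -/
def Nbr {Z : Type} (A : Z → Z → Prop) (v : Z) : Set Z :=
  {w | w ≠ v ∧ (A v w ∨ A w v)}

/-- The in-neighborhood `N^in(v)`. -/
def NIn {Z : Type} (A : Z → Z → Prop) (v : Z) : Set Z :=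
  {w | w ≠ v ∧ A w v}

/-- The out-neighborhood `N^out(v)`. -/
def NOut {Z : Type} (A : Z → Z → Prop) (v : Z) : Set Z :=
  {w | w ≠ v ∧ A v w}

/-- `A_r`: the arcs of `R` minus all arcs between `M` and `X`. -/
def ArRel {Z : Type} (A : Z → Z → Prop) (X M : Set Z) : Z → Z → Prop :=
  fun v w => A v w ∧ ¬(v ∈ M ∧ w ∈ X) ∧ ¬(v ∈ X ∧ w ∈ M)

/-- `A_d = { m β(x) : m x ∈ A(R) ∩ (M × X) }`. -/
def AdRel {Z : Type} (A : Z → Z → Prop) (X M : Set Z) (β : Z → Z) : Z → Z → Prop :=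
  fun v w => v ∈ M ∧ ∃ x ∈ X, A v x ∧ w = β x

/-- `A_u = { β(x) m : x m ∈ A(R) ∩ (X × M) }`. -/
def AuRel {Z : Type} (A : Z → Z → Prop) (X M : Set Z) (β : Z → Z) : Z → Z → Prop :=
  fun v w => w ∈ M ∧ ∃ x ∈ X, A x w ∧ v = β x

/-- The rearranged digraph `S`, with `A(S) = A_r ∪ A_d ∪ A_u`. -/
def SRel {Z : Type} (A : Z → Z → Prop) (X M : Set Z) (β : Z → Z) : Z → Z → Prop :=
  fun v w => ArRel A X M v w ∨ AdRel A X M β v w ∨ AuRel A X M β v w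

/-- `U_ξ = { v : ξ(v) ∈ T and ξ[N_G(v)] ∩ M ≠ ∅ }` (for `T = X`; with `T = Y`
this gives `U'_ζ`). -/
def USet {V Z : Type} (AG : V → V → Prop) (T M : Set Z) (ξ : V → Z) : Set V :=
  {v | ξ v ∈ T ∧ ∃ w ∈ Nbr AG v, ξ w ∈ M}

open Classical in
/-- The rearranged homomorphism `ρ_G(ξ)`: `β(ξ(v))` on `U_ξ` and `ξ(v)` elsewhere. -/
noncomputable def rhoMap {V Z : Type} (AG : V → V → Prop) (X M : Set Z) (β : Z → Z)
    (ξ : V → Z) : V → Z :=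
  fun v => if v ∈ USet AG X M ξ then β (ξ v) else ξ v

/-!
Unroll a closed walk of `S` into a periodic infinite walk. Between two consecutive arcs not in
`A_r` the walk follows arcs of `R`. An arc `β(x) m` of `A_u` can be followed by no such arc: a
later `β(x') m'` would give a walk in `R` from `M` to `Y`, and a later `m' β(x')` would give the
walk `x, m, …, m', x'` leaving the convex set `X`. An arc `m β(x)` of `A_d` can only be followed by
an arc of `A_u`, since a later `m' β(x')` would give a walk from `Y` to `M`. By periodicity every
arc outside `A_r` is followed by another one, so all arcs lie in `A_r ⊆ A(R)`, and `R ∈ T_a`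
rules out the closed walk.
-/

open Relation

section Walks

variable {Z : Type} {A : Z → Z → Prop}

theorem exists_walk_extension_of_reflTransGen {z : ℕ → Z} {I : ℕ} {b : Z}
    (hz : ∀ i < I, A (z i) (z (i + 1))) (hb : ReflTransGen A (z I) b) :
    ∃ (z' : ℕ → Z) (I' : ℕ), I ≤ I' ∧ (∀ i < I', A (z' i) (z' (i + 1))) ∧
      (∀ i ≤ I, z' i = z i) ∧ z' I' = b := by
  induction hb with
  | refl => exact ⟨z, I, le_rfl, hz, fun _ _ => rfl, rfl⟩
  | @tail c d _ hcd ih =>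
    obtain ⟨z', I', hII', hz', hpre, hend⟩ := ih
    refine ⟨Function.update z' (I' + 1) d, I' + 1, by omega, fun i hi => ?_, fun i hi => ?_,
      by simp⟩
    · rcases (Nat.lt_succ_iff.mp hi).lt_or_eq with hi | rfl
      · rw [Function.update_of_ne (by omega), Function.update_of_ne (by omega)]
        exact hz' i hi
      · rw [Function.update_of_ne (by omega), Function.update_self, hend]
        exact hcd
    · rw [Function.update_of_ne (by omega)]
      exact hpre i hi

theorem exists_walk_of_reflTransGen {a b : Z} (h : ReflTransGen A a b) :
    ∃ (z : ℕ → Z) (I : ℕ), (∀ i < I, A (z i) (z (i + 1))) ∧ z 0 = a ∧ z I = b := by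
  obtain ⟨z, I, -, hz, hpre, hend⟩ :=
    exists_walk_extension_of_reflTransGen (z := fun _ => a) (I := 0) (by simp) h
  exact ⟨z, I, hz, hpre 0 le_rfl, hend⟩

theorem not_reflTransGen_of_not_exists_walk {P Q : Set Z}
    (h : ¬ ∃ (z : ℕ → Z) (I : ℕ), (∀ i < I, A (z i) (z (i + 1))) ∧ z 0 ∈ P ∧ z I ∈ Q)
    {a b : Z} (ha : a ∈ P) (hb : b ∈ Q) : ¬ ReflTransGen A a b := fun hab => by
  obtain ⟨z, I, hz, h0, hI⟩ := exists_walk_of_reflTransGen hab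
  exact h ⟨z, I, hz, h0 ▸ ha, hI ▸ hb⟩

theorem mem_of_reflTransGen_of_convex {X : Set Z}
    (hconv : ∀ (z : ℕ → Z) (I : ℕ), (∀ i < I, A (z i) (z (i + 1))) →
      z 0 ∈ X → z I ∈ X → ∀ i ≤ I, z i ∈ X)
    {a v b : Z} (ha : a ∈ X) (hb : b ∈ X) (hav : ReflTransGen A a v)
    (hvb : ReflTransGen A v b) : v ∈ X := by
  obtain ⟨z, I, hz, h0, hI⟩ := exists_walk_of_reflTransGen hav
  obtain ⟨z', I', hII', hz', hpre, hend⟩ :=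
    exists_walk_extension_of_reflTransGen hz (hI ▸ hvb)
  have hv := hconv z' I' hz' (by rw [hpre 0 (by omega), h0]; exact ha) (hend ▸ hb) I hII'
  rwa [hpre I le_rfl, hI] at hv

theorem exists_reflTransGen_not_rel (w : ℕ → Z) (k d : ℕ)
    (h : ¬ A (w (k + d)) (w (k + d + 1))) :
    ∃ q, ReflTransGen A (w k) (w q) ∧ ¬ A (w q) (w (q + 1)) := by
  induction d generalizing k with
  | zero => exact ⟨k, .refl, h⟩
  | succ d ih =>
    by_cases hk : A (w k) (w (k + 1))
    · obtain ⟨q, hkq, hq⟩ := ih (k + 1) (by rwa [show k + 1 + d = k + (d + 1) by omega])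
      exact ⟨q, .head hk hkq, hq⟩
    · exact ⟨k, .refl, hk⟩

theorem apply_mod_eq_of_closed {z : ℕ → Z} {I i : ℕ} (hcl : z 0 = z I) (hi : i ≤ I) :
    z (i % I) = z i := by
  rcases hi.lt_or_eq with hi | rfl
  · rw [Nat.mod_eq_of_lt hi]
  · rw [Nat.mod_self, hcl]

theorem rel_apply_mod_of_closed {z : ℕ → Z} {I : ℕ} (hI : 0 < I)
    (hz : ∀ i < I, A (z i) (z (i + 1))) (hcl : z 0 = z I) (i : ℕ) :
    A (z (i % I)) (z ((i + 1) % I)) := by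
  have hi := Nat.mod_lt i hI
  rw [← Nat.mod_add_mod, apply_mod_eq_of_closed hcl hi]
  exact hz _ hi

end Walks

section Rearrangement

variable {Z : Type} {A : Z → Z → Prop} {X M Y : Set Z} {β : Z → Z}

theorem false_of_auRel_of_reflTransGen (hXM : X ∩ M = ∅) (hβ : Set.MapsTo β X Y)
    (hconv : ∀ ⦃a v b⦄, a ∈ X → b ∈ X → ReflTransGen A a v → ReflTransGen A v b → v ∈ X)
    (hMY : ∀ ⦃m y⦄, m ∈ M → y ∈ Y → ¬ ReflTransGen A m y)
    {u v u' v' : Z} (huv : AuRel A X M β u v) (hvu' : ReflTransGen A v u')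
    (hcross : AdRel A X M β u' v' ∨ AuRel A X M β u' v') : False := by
  obtain ⟨hvM, x, hx, hxv, -⟩ := huv
  rcases hcross with ⟨-, x', hx', hu'x', -⟩ | ⟨-, x', hx', -, rfl⟩
  · have hvX : v ∈ X := hconv hx hx' (.single hxv) (hvu'.tail hu'x')
    exact (Set.eq_empty_iff_forall_notMem.mp hXM) v ⟨hvX, hvM⟩
  · exact hMY hvM (hβ hx') hvu'

theorem auRel_of_adRel_of_reflTransGen (hβ : Set.MapsTo β X Y)
    (hYM : ∀ ⦃y m⦄, y ∈ Y → m ∈ M → ¬ ReflTransGen A y m)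
    {u v u' v' : Z} (huv : AdRel A X M β u v) (hvu' : ReflTransGen A v u')
    (hcross : AdRel A X M β u' v' ∨ AuRel A X M β u' v') : AuRel A X M β u' v' := by
  obtain ⟨-, x, hx, -, rfl⟩ := huv
  exact hcross.resolve_left fun hd => hYM (hβ hx) hd.1 hvu'

theorem arRel_of_periodic (hXM : X ∩ M = ∅) (hβ : Set.MapsTo β X Y)
    (hconv : ∀ ⦃a v b⦄, a ∈ X → b ∈ X → ReflTransGen A a v → ReflTransGen A v b → v ∈ X)
    (hMY : ∀ ⦃m y⦄, m ∈ M → y ∈ Y → ¬ ReflTransGen A m y)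
    (hYM : ∀ ⦃y m⦄, y ∈ Y → m ∈ M → ¬ ReflTransGen A y m)
    {w : ℕ → Z} {I : ℕ} (hI : 0 < I) (hper : Function.Periodic w I)
    (hS : ∀ i, SRel A X M β (w i) (w (i + 1))) (p : ℕ) :
    ArRel A X M (w p) (w (p + 1)) := by
  have hcross : ∀ q, ¬ ArRel A X M (w q) (w (q + 1)) →
      AdRel A X M β (w q) (w (q + 1)) ∨ AuRel A X M β (w q) (w (q + 1)) :=
    fun q hq => (hS q).resolve_left hq
  -- the arc at `p` recurs at `p + I`
  have hnext : ∀ p, ¬ ArRel A X M (w p) (w (p + 1)) → ∃ q,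
      ReflTransGen A (w (p + 1)) (w q) ∧ ¬ ArRel A X M (w q) (w (q + 1)) := by
    intro p hp
    obtain ⟨q, hpq, hq⟩ := exists_reflTransGen_not_rel w (p + 1) (I - 1) (by
      rwa [show p + 1 + (I - 1) = p + I by omega, hper, show p + I + 1 = p + 1 + I by omega,
        hper])
    exact ⟨q, ReflTransGen.mono (fun _ _ h => h.1) _ _ hpq, hq⟩
  have hnotAu : ∀ p, ¬ ArRel A X M (w p) (w (p + 1)) → ¬ AuRel A X M β (w p) (w (p + 1)) := by
    intro p hp hu
    obtain ⟨q, hpq, hq⟩ := hnext p hp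
    exact false_of_auRel_of_reflTransGen hXM hβ hconv hMY hu hpq (hcross q hq)
  by_contra hp
  rcases hcross p hp with hd | hu
  · obtain ⟨q, hpq, hq⟩ := hnext p hp
    exact hnotAu q hq (auRel_of_adRel_of_reflTransGen hβ hYM hd hpq (hcross q hq))
  · exact hnotAu p hp hu

end Rearrangement

theorem stmt18_general {Z : Type}
    (A : Z → Z → Prop) (X M Y : Set Z) (β : Z → Z)
    (hXM : X ∩ M = ∅)
    (hβ : Set.MapsTo β X Y)
    (hconv : ∀ (z : ℕ → Z) (I : ℕ), (∀ i < I, A (z i) (z (i + 1))) →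
      z 0 ∈ X → z I ∈ X → ∀ i ≤ I, z i ∈ X)
    (hMYwalk : ¬ ∃ (z : ℕ → Z) (I : ℕ),
      (∀ i < I, A (z i) (z (i + 1))) ∧ z 0 ∈ M ∧ z I ∈ Y)
    (hYMwalk : ¬ ∃ (z : ℕ → Z) (I : ℕ),
      (∀ i < I, A (z i) (z (i + 1))) ∧ z 0 ∈ Y ∧ z I ∈ M)
    (hTa : Ta A) :
    Ta (SRel A X M β) := by
  intro z I hI harcs hcl
  have hAr := arRel_of_periodic hXM hβ
    (fun _ _ _ => mem_of_reflTransGen_of_convex hconv)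
    (fun _ _ => not_reflTransGen_of_not_exists_walk hMYwalk)
    (fun _ _ => not_reflTransGen_of_not_exists_walk hYMwalk)
    (w := fun i => z (i % I)) hI (fun i => by simp)
    (rel_apply_mod_of_closed hI (fun i hi => (harcs i hi).1) hcl)
  refine hTa z I hI (fun i hi => ⟨?_, (harcs i hi).2⟩) hcl
  have harc := (hAr i).1
  rwa [apply_mod_eq_of_closed hcl hi.le, apply_mod_eq_of_closed hcl hi] at harc

/-- Under the rearrangement setup, with `X` convex in `R` and no walk in `R`
from `M` to `Y` or from `Y` to `M`: if `R ∈ T_a`, then `S ∈ T_a`. -/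
theorem stmt18 {Z : Type} [Finite Z] [Nonempty Z]
    (A : Z → Z → Prop) (X M Y : Set Z) (β : Z → Z)
    (hXM : X ∩ M = ∅) (hMY : M ∩ Y = ∅)
    (hMNY : ∀ y ∈ Y, M ∩ Nbr A y = ∅)
    (hβ : Set.MapsTo β X Y)
    (hconv : ∀ (z : ℕ → Z) (I : ℕ), (∀ i < I, A (z i) (z (i + 1))) →
      z 0 ∈ X → z I ∈ X → ∀ i ≤ I, z i ∈ X)
    (hMYwalk : ¬ ∃ (z : ℕ → Z) (I : ℕ),
      (∀ i < I, A (z i) (z (i + 1))) ∧ z 0 ∈ M ∧ z I ∈ Y)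
    (hYMwalk : ¬ ∃ (z : ℕ → Z) (I : ℕ),
      (∀ i < I, A (z i) (z (i + 1))) ∧ z 0 ∈ Y ∧ z I ∈ M)
    (hTa : Ta A) :
    Ta (SRel A X M β) :=
  stmt18_general A X M Y β hXM hβ hconv hMYwalk hYMwalk hTa
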